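/- arXiv:2402.05560 — 4 statements merged into one kernel-verified Lean document; each statement's English description precedes it below -/
import Mathlib

section
/- For any full binary tree T, the augmented tree aug(T) satisfies EPT-sum(aug(T)) ≤ (3/2)·EPT-sum(T), where EPT-sum of a rooted tree is the sum over all leaves of their depths. -/
/-- Rooted trees where each internal node has one or two children. -/
inductive RTree : Type
  | leaf : RTree
  | uno : RTree → RTree
  | duo : RTree → RTree → RTree

namespace RTree

/-- Number of leaves. -/
def leaves : RTree → ℕ
  | leaf => 1
  | uno t => t.leaves
  | duo l r => l.leaves + r.leaves

/-- EPT-sum of a rooted tree: the sum over all leaves of their depths. -/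
def eptSum : RTree → ℕ
  | leaf => 0
  | uno t => t.eptSum + t.leaves
  | duo l r => l.eptSum + r.eptSum + (l.leaves + r.leaves)

/-- A full binary tree: every internal node has exactly two children. -/
def IsFullBinary : RTree → Prop
  | leaf => True
  | uno _ => False
  | duo l r => l.IsFullBinary ∧ r.IsFullBinary

/-- The augmented tree: for each internal node, the edge to a child whose
subtree has at most as many leaves as the other child's subtree is
subdivided once. -/
def aug : RTree → RTree
  | leaf => leaf
  | uno t => uno t.aug
  | duo l r =>
      if r.leaves ≤ l.leaves then duo l.aug (uno r.aug) else duo (uno l.aug) r.aug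

@[simp]
theorem leaves_aug (t : RTree) : t.aug.leaves = t.leaves := by
  induction t with
  | leaf => rfl
  | uno t ih => simpa [aug, leaves] using ih
  | duo l r ihl ihr => by_cases h : r.leaves ≤ l.leaves <;> simp [aug, leaves, h, ihl, ihr]

theorem eptSum_aug_duo (l r : RTree) :
    (duo l r).aug.eptSum =
      l.aug.eptSum + r.aug.eptSum + (l.leaves + r.leaves) + min l.leaves r.leaves := by
  by_cases h : r.leaves ≤ l.leaves <;>
    simp only [aug, eptSum, leaves, leaves_aug, h, if_true, if_false] <;> omega

/-- The factor `3/2` holds node by node: the subdivided edge at a node lengthens the paths to at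
most half of the leaves below it. -/
theorem two_mul_eptSum_aug_le (t : RTree) : 2 * t.aug.eptSum ≤ 3 * t.eptSum := by
  induction t with
  | leaf => simp [aug, eptSum]
  | uno t ih => simp only [aug, eptSum, leaves_aug]; omega
  | duo l r ihl ihr =>
      have hmin : 2 * min l.leaves r.leaves ≤ l.leaves + r.leaves := by omega
      rw [eptSum_aug_duo, eptSum]
      omega

end RTree

theorem eptSum_aug_le_general (T : RTree) :
    (T.aug.eptSum : ℚ) ≤ 3 / 2 * T.eptSum := by
  have h : (2 * T.aug.eptSum : ℚ) ≤ 3 * T.eptSum := by exact_mod_cast T.two_mul_eptSum_aug_le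
  linarith

/-- For any full binary tree `T`, `EPT-sum(aug(T)) ≤ (3/2) · EPT-sum(T)`. -/
theorem eptSum_aug_le (T : RTree) (hT : T.IsFullBinary) :
    (T.aug.eptSum : ℚ) ≤ 3 / 2 * T.eptSum :=
  eptSum_aug_le_general T
end

section
/- Let G be a tree with at least two vertices, let c be a centroid of G, and let e be a balanced edge of G (an edge minimizing the number of vertices in the largest component of G \ e). Then e is incident on c. -/
/-- The subgraph of `G` obtained by deleting the edge `uv`. -/
noncomputable def delEdge {V : Type*} (G : SimpleGraph V) (u v : V) : SimpleGraph V :=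
  G.deleteEdges {s(u, v)}

/-- The weight (size of the larger of the two components) of the cut given by
the edge `uv` of a tree `G`. -/
noncomputable def cutWeight {V : Type*} (G : SimpleGraph V) (u v : V) : ℕ :=
  max ((delEdge G u v).connectedComponentMk u).supp.ncard
      ((delEdge G u v).connectedComponentMk v).supp.ncard

/-!
Let `uv` be a balanced edge with the centroid `c` on the side of `u`, and suppose `u ≠ c`.
Let `w` be the neighbour of `u` towards `c`. The side of `u` at the edge `uw` contains `u` and
the whole side of `v` at `uv`, so it is strictly larger than the latter; and it misses `c`, so
it lies in a component of `G - c` and contains at most half of the vertices. Hence the weight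
of `uw` is the size of the side of `w`, which is less than the size of the side of `u` at `uv`,
so `uw` is strictly better balanced than `uv`.
-/

namespace SimpleGraph

variable {V : Type*} {G : SimpleGraph V} {u v w x y c : V}

lemma ConnectedComponent.exists_ncard_supp_le_induce [Finite V] {G' : SimpleGraph V}
    (hle : G' ≤ G) {s : Set V} (C : G'.ConnectedComponent) (hC : C.supp ⊆ s) :
    ∃ K : (G.induce s).ConnectedComponent, C.supp.ncard ≤ K.supp.ncard := by
  classical
  induction C using ConnectedComponent.ind with | h x =>
  have hx : x ∈ s := hC rfl
  refine ⟨(G.induce s).connectedComponentMk ⟨x, hx⟩, ?_⟩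
  suffices hsub : (G'.connectedComponentMk x).supp ⊆
      Subtype.val '' ((G.induce s).connectedComponentMk ⟨x, hx⟩).supp by
    simpa [Set.ncard_image_of_injective _ Subtype.val_injective] using
      Set.ncard_le_ncard hsub (Set.toFinite _)
  intro y hy
  obtain ⟨p⟩ := ConnectedComponent.exact hy
  have hps : ∀ z ∈ (p.mapLe hle).support, z ∈ s := fun z hz => by
    rw [Walk.support_mapLe_eq_support] at hz
    exact hC (ConnectedComponent.sound ⟨p.dropUntil z hz⟩)
  exact ⟨_, ConnectedComponent.sound ⟨(p.mapLe hle).induce s hps⟩, rfl⟩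

lemma delEdge_comm (G : SimpleGraph V) (u v : V) : delEdge G u v = delEdge G v u := by
  rw [delEdge, delEdge, Sym2.eq_swap]

lemma cutWeight_comm (G : SimpleGraph V) (u v : V) : cutWeight G u v = cutWeight G v u := by
  rw [cutWeight, cutWeight, delEdge_comm, max_comm]

lemma delEdge_adj : (delEdge G u v).Adj x y ↔ G.Adj x y ∧ s(x, y) ≠ s(u, v) := by
  simp [delEdge]

lemma reachable_delEdge_of_notMem_support {G' : SimpleGraph V} (hle : G' ≤ G) (p : G'.Walk x y)
    (hu : u ∉ p.support) : (delEdge G u w).Reachable x y :=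
  reachable_deleteEdges_iff_exists_walk.mpr
    ⟨p.mapLe hle, fun he => hu (p.fst_mem_support_of_mem_edges (by simpa using he))⟩

def cutSide (G : SimpleGraph V) (u v : V) : Set V :=
  ((delEdge G u v).connectedComponentMk u).supp

lemma mem_cutSide : x ∈ cutSide G u v ↔ (delEdge G u v).Reachable x u :=
  ConnectedComponent.eq

lemma mem_cutSide_swap : x ∈ cutSide G v u ↔ (delEdge G u v).Reachable x v := by
  rw [mem_cutSide, delEdge_comm]

lemma self_mem_cutSide : u ∈ cutSide G u v :=
  mem_cutSide.mpr (Reachable.refl u)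

lemma cutWeight_eq_max_ncard_cutSide :
    cutWeight G u v = max (cutSide G u v).ncard (cutSide G v u).ncard := by
  rw [cutWeight, cutSide, cutSide, delEdge_comm G v u]

lemma IsAcyclic.not_reachable_delEdge (hG : G.IsAcyclic) (huv : G.Adj u v) :
    ¬ (delEdge G u v).Reachable u v :=
  isAcyclic_iff_forall_adj_isBridge.mp hG huv

lemma IsAcyclic.disjoint_cutSide (hG : G.IsAcyclic) (huv : G.Adj u v) :
    Disjoint (cutSide G u v) (cutSide G v u) := by
  refine Set.disjoint_left.mpr fun x hxu hxv => hG.not_reachable_delEdge huv ?_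
  rw [mem_cutSide] at hxu
  rw [mem_cutSide_swap] at hxv
  exact hxu.symm.trans hxv

lemma Preconnected.cutSide_union_cutSide (hG : G.Preconnected) :
    cutSide G u v ∪ cutSide G v u = Set.univ := by
  have hclosed : ∀ {x y : V}, G.Walk x y → y ∈ cutSide G u v ∪ cutSide G v u →
      x ∈ cutSide G u v ∪ cutSide G v u := by
    intro x y p
    induction p with
    | nil => exact id
    | @cons x z _ hxz _ ih =>
      intro hy
      by_cases he : s(x, z) = s(u, v)
      · rcases Sym2.eq_iff.mp he with ⟨rfl, -⟩ | ⟨rfl, -⟩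
        · exact Or.inl self_mem_cutSide
        · exact Or.inr self_mem_cutSide
      · have hadj : (delEdge G u v).Adj x z := delEdge_adj.mpr ⟨hxz, he⟩
        rcases ih hy with hz | hz
        · exact Or.inl (mem_cutSide.mpr (hadj.reachable.trans (mem_cutSide.mp hz)))
        · exact Or.inr (mem_cutSide_swap.mpr (hadj.reachable.trans (mem_cutSide_swap.mp hz)))
  exact Set.eq_univ_of_forall fun x => hclosed (hG x u).some (Or.inl self_mem_cutSide)

lemma IsTree.ncard_cutSide_add_ncard_cutSide [Finite V] (hG : G.IsTree) (huv : G.Adj u v) :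
    (cutSide G u v).ncard + (cutSide G v u).ncard = Nat.card V := by
  rw [← Set.ncard_union_eq (hG.isAcyclic.disjoint_cutSide huv),
    hG.connected.preconnected.cutSide_union_cutSide, Set.ncard_univ]

lemma exists_adj_mem_cutSide (hcu : c ∈ cutSide G u v) (hne : u ≠ c) :
    ∃ w, G.Adj u w ∧ w ≠ v ∧ c ∈ cutSide G w u := by
  obtain ⟨p, hp⟩ := (mem_cutSide.mp hcu).symm.exists_isPath
  obtain ⟨w, huw, q, rfl⟩ := Walk.exists_eq_cons_of_ne hne p
  obtain ⟨-, huq⟩ := Walk.cons_isPath_iff huw q |>.mp hp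
  obtain ⟨hGuw, hedge⟩ := delEdge_adj.mp huw
  refine ⟨w, hGuw, fun hwv => hedge (by rw [hwv]), ?_⟩
  exact mem_cutSide_swap.mpr (reachable_delEdge_of_notMem_support (deleteEdges_le _) q huq).symm

lemma IsAcyclic.ncard_cutSide_lt [Finite V] (hG : G.IsAcyclic) (huv : G.Adj u v)
    (huw : G.Adj u w) (hvw : v ≠ w) : (cutSide G v u).ncard < (cutSide G u w).ncard := by
  have hu : u ∉ cutSide G v u := hG.disjoint_cutSide huv |>.notMem_of_mem_left self_mem_cutSide
  have hsub : insert u (cutSide G v u) ⊆ cutSide G u w := by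
    classical
    rintro x (rfl | hx)
    · exact self_mem_cutSide
    obtain ⟨p⟩ := mem_cutSide_swap.mp hx
    have hup : u ∉ p.support := fun hmem =>
      hG.not_reachable_delEdge huv ⟨p.dropUntil u hmem⟩
    have hvu : (delEdge G u w).Adj v u :=
      delEdge_adj.mpr ⟨huv.symm, fun h => hvw (Sym2.congr_right.mp (Sym2.eq_swap.trans h))⟩
    exact mem_cutSide.mpr ((reachable_delEdge_of_notMem_support (deleteEdges_le _) p hup).trans
      hvu.reachable)
  calc (cutSide G v u).ncard < (insert u (cutSide G v u)).ncard :=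
        (Set.ncard_insert_of_notMem hu).symm ▸ Nat.lt_succ_self _
    _ ≤ (cutSide G u w).ncard := Set.ncard_le_ncard hsub

def IsCentroid (G : SimpleGraph V) (c : V) : Prop :=
  ∀ K : (G.induce {v | v ≠ c}).ConnectedComponent, 2 * K.supp.ncard ≤ Nat.card V

lemma IsCentroid.two_mul_ncard_cutSide_le [Finite V] (hc : G.IsCentroid c)
    (hcu : c ∉ cutSide G u v) : 2 * (cutSide G u v).ncard ≤ Nat.card V := by
  have hsub : cutSide G u v ⊆ {x | x ≠ c} := fun x hx hxc => hcu (hxc ▸ hx)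
  obtain ⟨K, hK⟩ := ConnectedComponent.exists_ncard_supp_le_induce (deleteEdges_le _) _ hsub
  exact (Nat.mul_le_mul_left 2 hK).trans (hc K)

lemma IsTree.exists_adj_cutWeight_lt [Finite V] (hG : G.IsTree) (hc : G.IsCentroid c)
    (huv : G.Adj u v) (hcu : c ∈ cutSide G u v) (hne : u ≠ c) :
    ∃ w, G.Adj u w ∧ cutWeight G u w < cutWeight G u v := by
  obtain ⟨w, huw, hwv, hcw⟩ := exists_adj_mem_cutSide hcu hne
  have hcw' : c ∉ cutSide G u w := (hG.isAcyclic.disjoint_cutSide huw).notMem_of_mem_right hcw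
  have hhalf := hc.two_mul_ncard_cutSide_le hcw'
  have hlt := hG.isAcyclic.ncard_cutSide_lt huv huw (Ne.symm hwv)
  have hsum_uv := hG.ncard_cutSide_add_ncard_cutSide huv
  have hsum_uw := hG.ncard_cutSide_add_ncard_cutSide huw
  refine ⟨w, huw, ?_⟩
  rw [cutWeight_eq_max_ncard_cutSide, cutWeight_eq_max_ncard_cutSide]
  omega

lemma IsTree.eq_of_mem_cutSide_of_forall_cutWeight_le [Finite V] (hG : G.IsTree)
    (hc : G.IsCentroid c) (huv : G.Adj u v) (hcu : c ∈ cutSide G u v)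
    (hmin : ∀ a b : V, G.Adj a b → cutWeight G u v ≤ cutWeight G a b) : u = c := by
  by_contra hne
  obtain ⟨w, huw, hlt⟩ := hG.exists_adj_cutWeight_lt hc huv hcu hne
  exact (hmin u w huw).not_gt hlt

end SimpleGraph

open SimpleGraph

theorem balanced_edge_incident_centroid_general {V : Type*} [Fintype V]
    (G : SimpleGraph V) (hG : G.IsTree)
    (c : V)
    (hc : ∀ K : (G.induce {v : V | v ≠ c}).ConnectedComponent,
      2 * K.supp.ncard ≤ Fintype.card V)
    (u v : V) (huv : G.Adj u v)
    (hbal : ∀ a b : V, G.Adj a b → cutWeight G u v ≤ cutWeight G a b) :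
    u = c ∨ v = c := by
  have hcent : G.IsCentroid c := by simpa only [IsCentroid, Nat.card_eq_fintype_card] using hc
  have hside : c ∈ cutSide G u v ∪ cutSide G v u :=
    Set.eq_univ_iff_forall.mp hG.connected.preconnected.cutSide_union_cutSide c
  rcases hside with hcu | hcv
  · exact .inl (hG.eq_of_mem_cutSide_of_forall_cutWeight_le hcent huv hcu hbal)
  · refine .inr (hG.eq_of_mem_cutSide_of_forall_cutWeight_le hcent huv.symm hcv ?_)
    simpa only [cutWeight_comm G v u] using hbal

/-- In a tree with at least two vertices, every balanced edge (an edge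
minimizing the size of the largest component of `G \ e`) is incident on any
centroid `c`. -/
theorem balanced_edge_incident_centroid {V : Type*} [Fintype V]
    (G : SimpleGraph V) (hG : G.IsTree) (hn : 2 ≤ Fintype.card V)
    (c : V)
    (hc : ∀ K : (G.induce {v : V | v ≠ c}).ConnectedComponent,
      2 * K.supp.ncard ≤ Fintype.card V)
    (u v : V) (huv : G.Adj u v)
    (hbal : ∀ a b : V, G.Adj a b → cutWeight G u v ≤ cutWeight G a b) :
    u = c ∨ v = c :=
  balanced_edge_incident_centroid_general G hG c hc u v huv hbal
end

section
/- Let G be a tree, T an EPT of G, uv ∈ E(G), and (T^u, T^v) the splitting of T along uv. Then T^u is an EPT of the component G_u of G \ uv containing u, and T^v is an EPT of the component G_v containing v. -/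
open scoped Classical

/-- Rooted trees whose leaves are labelled by vertices and whose internal
nodes are labelled by (potential) edges, each internal node having one or two
children. -/
inductive LTree (V : Type*) : Type _
  | leaf : V → LTree V
  | node1 : Sym2 V → LTree V → LTree V
  | node2 : Sym2 V → LTree V → LTree V → LTree V

variable {V : Type*}

/-- The graph `G` restricted to the vertex set `S`, with the edges in `D`
deleted (all vertices outside `S` become isolated). -/
def cutG (G : SimpleGraph V) (S : Set V) (D : Set (Sym2 V)) : SimpleGraph V where
  Adj a b := G.Adj a b ∧ a ∈ S ∧ b ∈ S ∧ s(a, b) ∉ D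
  symm := by
    constructor
    intro a b h
    exact ⟨h.1.symm, h.2.2.1, h.2.1, by rw [Sym2.eq_swap]; exact h.2.2.2⟩
  loopless := by
    constructor
    intro a h
    exact G.irrefl h.1

/-- The vertex set of the connected component of `a` in `G[S]` minus the
edges `D`. -/
def comp (G : SimpleGraph V) (S : Set V) (D : Set (Sym2 V)) (a : V) : Set V :=
  ((cutG G S D).connectedComponentMk a).supp

/-- `IsEPT G S D t` : `t` is an edge partition tree of the graph `G[S]` with
the edges in `D` removed.  A single vertex has the single-node EPT; otherwise
the root is an (available) edge `uv` of `G[S]`, and its children are EPTs of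
the connected components of `G[S] \ uv`: one child if `uv` is not a bridge,
two children (one per component) if it is. -/
inductive IsEPT (G : SimpleGraph V) : Set V → Set (Sym2 V) → LTree V → Prop
  | leaf (v : V) (D : Set (Sym2 V)) : IsEPT G {v} D (.leaf v)
  | node1 (u v : V) (S : Set V) (D : Set (Sym2 V)) (t : LTree V)
      (hadj : G.Adj u v) (hu : u ∈ S) (hv : v ∈ S) (hD : s(u, v) ∉ D)
      (hsame : comp G S (insert s(u, v) D) u = S)
      (ht : IsEPT G S (insert s(u, v) D) t) :
      IsEPT G S D (.node1 s(u, v) t)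
  | node2 (u v : V) (S : Set V) (D : Set (Sym2 V)) (t₁ t₂ : LTree V)
      (hadj : G.Adj u v) (hu : u ∈ S) (hv : v ∈ S) (hD : s(u, v) ∉ D)
      (hdiff : ¬ (cutG G S (insert s(u, v) D)).Reachable u v)
      (hcover : comp G S (insert s(u, v) D) u ∪ comp G S (insert s(u, v) D) v = S)
      (h₁ : IsEPT G (comp G S (insert s(u, v) D) u) (insert s(u, v) D) t₁)
      (h₂ : IsEPT G (comp G S (insert s(u, v) D) v) (insert s(u, v) D) t₂) :
      IsEPT G S D (.node2 s(u, v) t₁ t₂)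

/-- The splitting operation: `restrict S t` reattaches every node of `t`
whose label lies within `S` (a leaf labelled by a vertex of `S`, or an
internal node labelled by an edge with both endpoints in `S`) to its lowest
ancestor whose label lies within `S`; nodes with no such ancestor become the
root.  It returns `none` when no node of `t` lies within `S`.
(For the valid inputs considered here, at most one of the two children of a
surviving internal node can have leaves in `S` unless the node itself
survives, so the result is again a binary tree.) -/
noncomputable def restrict (S : Set V) : LTree V → Option (LTree V)
  | .leaf v => if v ∈ S then some (.leaf v) else none
  | .node1 e t =>
      match restrict S t with
      | none => none
      | some a => if ∀ x ∈ e, x ∈ S then some (.node1 e a) else some a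
  | .node2 e l r =>
      match restrict S l, restrict S r with
      | none, none => none
      | some a, none => if ∀ x ∈ e, x ∈ S then some (.node1 e a) else some a
      | none, some b => if ∀ x ∈ e, x ∈ S then some (.node1 e b) else some b
      | some a, some b => some (.node2 e a b)

/-!
Let `W` be a vertex set that only the edge `e` leaves, e.g. a component of `G \ e`. By induction
on the EPT, restricting an EPT of `G[S] \ D` whose vertex set meets `W` yields an EPT of
`G[W ∩ S] \ D`. Everything rests on the fact that a walk entering `W` uses `e`. Hence a trail
between two vertices of `W` cannot leave `W`, so the components of `G[S] \ D` cut down to `W` are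
components of `G[W ∩ S] \ D`; and when both sides of a bridge node meet `W`, both endpoints of the
bridge lie in `W`, for otherwise `e` would join the two sides.
-/

lemma cutG_le (G : SimpleGraph V) (S : Set V) (D : Set (Sym2 V)) : cutG G S D ≤ G :=
  fun _ _ h => h.1

lemma cutG_mono (G : SimpleGraph V) {S S' : Set V} (hS : S ⊆ S') (D : Set (Sym2 V)) :
    cutG G S D ≤ cutG G S' D :=
  fun _ _ h => ⟨h.1, hS h.2.1, hS h.2.2.1, h.2.2.2⟩

lemma cutG_congr {G : SimpleGraph V} {S : Set V} {D₁ D₂ : Set (Sym2 V)}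
    (h : ∀ ⦃a b⦄, G.Adj a b → a ∈ S → b ∈ S → (s(a, b) ∈ D₁ ↔ s(a, b) ∈ D₂)) :
    cutG G S D₁ = cutG G S D₂ := by
  ext a b
  exact and_congr_right fun hab => and_congr_right fun ha => and_congr_right fun hb =>
    not_congr (h hab ha hb)

lemma mem_comp_iff {G : SimpleGraph V} {S : Set V} {D : Set (Sym2 V)} {a x : V} :
    x ∈ comp G S D a ↔ (cutG G S D).Reachable x a := by
  rw [comp, SimpleGraph.ConnectedComponent.mem_supp_iff, SimpleGraph.ConnectedComponent.eq]

lemma eq_or_mem_of_reachable_cutG {G : SimpleGraph V} {S : Set V} {D : Set (Sym2 V)} {x y : V}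
    (h : (cutG G S D).Reachable x y) : x = y ∨ x ∈ S := by
  obtain ⟨_ | ⟨hxz, _⟩⟩ := h
  exacts [Or.inl rfl, Or.inr hxz.2.1]

namespace IsEPT

variable {G : SimpleGraph V}

lemma congr_deleted {S : Set V} {D₁ D₂ : Set (Sym2 V)} {t : LTree V} (h : IsEPT G S D₁ t)
    (hD : ∀ ⦃a b⦄, G.Adj a b → a ∈ S → b ∈ S → (s(a, b) ∈ D₁ ↔ s(a, b) ∈ D₂)) :
    IsEPT G S D₂ t := by
  induction h generalizing D₂ with
  | leaf v D => exact .leaf v D₂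
  | node1 u v S D t hadj hu hv hD' hsame _ ih =>
    have hins : ∀ ⦃a b⦄, G.Adj a b → a ∈ S → b ∈ S →
        (s(a, b) ∈ insert s(u, v) D ↔ s(a, b) ∈ insert s(u, v) D₂) :=
      fun a b hab ha hb => or_congr_right (hD hab ha hb)
    have hcomp : comp G S (insert s(u, v) D) u = comp G S (insert s(u, v) D₂) u := by
      rw [comp, comp, cutG_congr hins]
    exact .node1 u v S D₂ t hadj hu hv (mt (hD hadj hu hv).mpr hD') (hcomp ▸ hsame) (ih hins)
  | node2 u v S D t₁ t₂ hadj hu hv hD' hdiff hcover _ _ ih₁ ih₂ =>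
    have hins : ∀ ⦃a b⦄, G.Adj a b → a ∈ S → b ∈ S →
        (s(a, b) ∈ insert s(u, v) D ↔ s(a, b) ∈ insert s(u, v) D₂) :=
      fun a b hab ha hb => or_congr_right (hD hab ha hb)
    have hcut := cutG_congr hins
    have h₁ := ih₁ fun a b hab ha hb =>
      hins hab (Set.subset_union_left.trans hcover.le ha)
        (Set.subset_union_left.trans hcover.le hb)
    have h₂ := ih₂ fun a b hab ha hb =>
      hins hab (Set.subset_union_right.trans hcover.le ha)
        (Set.subset_union_right.trans hcover.le hb)
    have hcomp (x : V) : comp G S (insert s(u, v) D) x = comp G S (insert s(u, v) D₂) x := by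
      rw [comp, comp, hcut]
    simp only [hcomp] at hcover h₁ h₂
    exact .node2 u v S D₂ t₁ t₂ hadj hu hv (mt (hD hadj hu hv).mpr hD') (hcut ▸ hdiff)
      hcover h₁ h₂

lemma of_insert {S : Set V} {D : Set (Sym2 V)} {t : LTree V} {a b : V}
    (h : IsEPT G S (insert s(a, b) D) t) (hab : ¬ (a ∈ S ∧ b ∈ S)) : IsEPT G S D t := by
  refine h.congr_deleted fun x y _ hx hy => ⟨fun hxy => ?_, Set.mem_insert_of_mem _⟩
  rcases hxy with hxy | hxy
  · rcases Sym2.eq_iff.mp hxy with ⟨rfl, rfl⟩ | ⟨rfl, rfl⟩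
    exacts [absurd ⟨hx, hy⟩ hab, absurd ⟨hy, hx⟩ hab]
  · exact hxy

lemma restrict_eq_none {W S : Set V} {D : Set (Sym2 V)} {t : LTree V} (h : IsEPT G S D t)
    (hW : W ∩ S = ∅) : restrict W t = none := by
  induction h with
  | leaf v D => simpa [restrict] using hW
  | node1 u v S D t _ _ _ _ _ _ ih => simp only [restrict, ih hW]
  | node2 u v S D t₁ t₂ _ _ _ _ _ hcover _ _ ih₁ ih₂ =>
    rw [← hcover, Set.inter_union_distrib_left, Set.union_empty_iff] at hW
    simp only [restrict, ih₁ hW.1, ih₂ hW.2]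

end IsEPT

def IsOnlyEdgeLeaving (G : SimpleGraph V) (W : Set V) (e : Sym2 V) : Prop :=
  ∀ ⦃a b⦄, G.Adj a b → a ∈ W → b ∉ W → s(a, b) = e

lemma isOnlyEdgeLeaving_supp (G : SimpleGraph V) (e : Sym2 V)
    (c : (G.deleteEdges {e}).ConnectedComponent) : IsOnlyEdgeLeaving G c.supp e := by
  intro a b hab ha hb
  by_contra hne
  exact hb ((c.mem_supp_congr_adj (by simpa [hab] using hne)).mp ha)

namespace IsOnlyEdgeLeaving

variable {G H : SimpleGraph V} {W : Set V} {e : Sym2 V}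

lemma mem_edges (hW : IsOnlyEdgeLeaving G W e) (hH : H ≤ G) {x y : V} (p : H.Walk x y)
    (hx : x ∉ W) (hy : y ∈ W) : e ∈ p.edges := by
  obtain ⟨d, hd, hd₁, hd₂⟩ := p.exists_boundary_dart Wᶜ hx (not_not.mpr hy)
  have hde : d.edge = e := Sym2.eq_swap.trans (hW (hH d.adj).symm (not_not.mp hd₂) hd₁)
  exact hde ▸ List.mem_map_of_mem hd

lemma mem_of_reachable (hW : IsOnlyEdgeLeaving G W e) (hH : H ≤ G) {a b x y : V}
    (hab : G.Adj a b) (hnr : ¬ H.Reachable a b) (hxa : H.Reachable x a) (hx : x ∈ W)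
    (hyb : H.Reachable y b) (hy : y ∈ W) : a ∈ W := by
  by_contra ha
  obtain ⟨p⟩ := hxa.symm
  have hep := hW.mem_edges hH p ha hx
  by_cases hb : b ∈ W
  · -- then `ab` itself is `e`, which `p` uses in `H`
    have hba : s(b, a) = e := hW hab.symm hb ha
    rw [← hba, Sym2.eq_swap] at hep
    exact hnr (p.edges_subset_edgeSet hep).reachable
  · obtain ⟨q⟩ := hyb.symm
    have heq := hW.mem_edges hH q hb hy
    induction e using Sym2.ind with
    | h z _ =>
      exact hnr (SimpleGraph.Reachable.trans ⟨p.takeUntil z (p.fst_mem_support_of_mem_edges hep)⟩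
        ⟨(q.takeUntil z (q.fst_mem_support_of_mem_edges heq)).reverse⟩)

lemma reachable_cutG_inter (hW : IsOnlyEdgeLeaving G W e) {S : Set V} {D : Set (Sym2 V)}
    {x y : V} (p : (cutG G S D).Walk x y) (hp : p.IsTrail) (hx : x ∈ W) (hy : y ∈ W) :
    (cutG G (W ∩ S) D).Reachable x y := by
  induction p with
  | nil => rfl
  | @cons x z y hxz p ih =>
    rw [SimpleGraph.Walk.isTrail_cons] at hp
    by_cases hz : z ∈ W
    · exact SimpleGraph.Adj.reachable (⟨hxz.1, ⟨hx, hxz.2.1⟩, ⟨hz, hxz.2.2.1⟩, hxz.2.2.2⟩ :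
        (cutG G (W ∩ S) D).Adj x z) |>.trans (ih hp.1 hz hy)
    · -- a trail that leaves `W` through `e` cannot come back
      refine absurd ?_ hp.2
      rw [hW hxz.1 hx hz]
      exact hW.mem_edges (cutG_le G S D) p hz hy

lemma comp_inter (hW : IsOnlyEdgeLeaving G W e) {S : Set V} {D : Set (Sym2 V)} {a : V}
    (ha : a ∈ W) : comp G (W ∩ S) D a = W ∩ comp G S D a := by
  ext x
  simp only [Set.mem_inter_iff, mem_comp_iff]
  refine ⟨fun h => ⟨?_, h.mono (cutG_mono G Set.inter_subset_right D)⟩, fun ⟨hx, h⟩ => ?_⟩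
  · rcases eq_or_mem_of_reachable_cutG h with rfl | hx
    exacts [ha, hx.1]
  · obtain ⟨p⟩ := h
    exact hW.reachable_cutG_inter p.toPath p.toPath.2.isTrail hx ha

end IsOnlyEdgeLeaving

namespace IsEPT

variable {G : SimpleGraph V} {W : Set V} {e : Sym2 V}

lemma exists_restrict_eq_some_node2 (hW : IsOnlyEdgeLeaving G W e) {a b : V} {S : Set V}
    {D : Set (Sym2 V)} {t₁ t₂ : LTree V} (hadj : G.Adj a b) (ha : a ∈ S) (hb : b ∈ S)
    (hD : s(a, b) ∉ D) (hdiff : ¬ (cutG G S (insert s(a, b) D)).Reachable a b)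
    (hcover : comp G S (insert s(a, b) D) a ∪ comp G S (insert s(a, b) D) b = S)
    (h₁ : IsEPT G (comp G S (insert s(a, b) D) a) (insert s(a, b) D) t₁)
    (h₂ : IsEPT G (comp G S (insert s(a, b) D) b) (insert s(a, b) D) t₂)
    (ih₁ : (W ∩ comp G S (insert s(a, b) D) a).Nonempty → ∃ t', restrict W t₁ = some t' ∧
      IsEPT G (W ∩ comp G S (insert s(a, b) D) a) (insert s(a, b) D) t')
    (ih₂ : (W ∩ comp G S (insert s(a, b) D) b).Nonempty → ∃ t', restrict W t₂ = some t' ∧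
      IsEPT G (W ∩ comp G S (insert s(a, b) D) b) (insert s(a, b) D) t')
    (hS : (W ∩ S).Nonempty) :
    ∃ t', restrict W (.node2 s(a, b) t₁ t₂) = some t' ∧ IsEPT G (W ∩ S) D t' := by
  have hcover' := Set.inter_union_distrib_left W _ _ ▸ congrArg (W ∩ ·) hcover
  by_cases hA : (W ∩ comp G S (insert s(a, b) D) a).Nonempty <;>
    by_cases hB : (W ∩ comp G S (insert s(a, b) D) b).Nonempty
  · obtain ⟨x, hxW, hx⟩ := hA
    obtain ⟨y, hyW, hy⟩ := hB
    have hH := cutG_le G S (insert s(a, b) D)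
    have haW := hW.mem_of_reachable hH hadj hdiff (mem_comp_iff.mp hx) hxW
      (mem_comp_iff.mp hy) hyW
    have hbW := hW.mem_of_reachable hH hadj.symm (fun h => hdiff h.symm) (mem_comp_iff.mp hy)
      hyW (mem_comp_iff.mp hx) hxW
    obtain ⟨t₁', hr₁, ht₁'⟩ := ih₁ ⟨x, hxW, hx⟩
    obtain ⟨t₂', hr₂, ht₂'⟩ := ih₂ ⟨y, hyW, hy⟩
    refine ⟨.node2 s(a, b) t₁' t₂', by simp only [restrict, hr₁, hr₂], ?_⟩
    rw [← hW.comp_inter haW] at ht₁' hcover'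
    rw [← hW.comp_inter hbW] at ht₂' hcover'
    exact .node2 a b _ D t₁' t₂' hadj ⟨haW, ha⟩ ⟨hbW, hb⟩ hD
      (fun h => hdiff (h.mono (cutG_mono G Set.inter_subset_right _))) hcover' ht₁' ht₂'
  · obtain ⟨t₁', hr₁, ht₁'⟩ := ih₁ hA
    rw [Set.not_nonempty_iff_eq_empty] at hB
    have hbW : b ∉ W := fun hbW => (Set.eq_empty_iff_forall_notMem.mp hB) b
      ⟨hbW, mem_comp_iff.mpr .rfl⟩
    refine ⟨t₁', by simp [restrict, hr₁, h₂.restrict_eq_none hB, hbW], ?_⟩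
    rw [← hcover', hB, Set.union_empty]
    exact ht₁'.of_insert fun h => hbW h.2.1
  · obtain ⟨t₂', hr₂, ht₂'⟩ := ih₂ hB
    rw [Set.not_nonempty_iff_eq_empty] at hA
    have haW : a ∉ W := fun haW => (Set.eq_empty_iff_forall_notMem.mp hA) a
      ⟨haW, mem_comp_iff.mpr .rfl⟩
    refine ⟨t₂', by simp [restrict, hr₂, h₁.restrict_eq_none hA, haW], ?_⟩
    rw [← hcover', hA, Set.empty_union]
    exact ht₂'.of_insert fun h => haW h.1.1
  · rw [← hcover', Set.not_nonempty_iff_eq_empty.mp hA,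
      Set.not_nonempty_iff_eq_empty.mp hB, Set.union_empty] at hS
    exact (hS.ne_empty rfl).elim

theorem exists_restrict_eq_some (hW : IsOnlyEdgeLeaving G W e) {S : Set V}
    {D : Set (Sym2 V)} {t : LTree V} (h : IsEPT G S D t) (hS : (W ∩ S).Nonempty) :
    ∃ t', restrict W t = some t' ∧ IsEPT G (W ∩ S) D t' := by
  induction h with
  | leaf v D =>
    have hv : v ∈ W := by simpa using hS
    refine ⟨.leaf v, by simp [restrict, hv], ?_⟩
    rw [Set.inter_eq_right.mpr (Set.singleton_subset_iff.mpr hv)]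
    exact .leaf v D
  | node1 a b S D t hadj ha hb hD hsame _ ih =>
    obtain ⟨t', hr, ht'⟩ := ih hS
    by_cases hab : a ∈ W ∧ b ∈ W
    · refine ⟨.node1 s(a, b) t', by simp [restrict, hr, hab], ?_⟩
      refine .node1 a b _ D t' hadj ⟨hab.1, ha⟩ ⟨hab.2, hb⟩ hD ?_ ht'
      rw [hW.comp_inter hab.1, hsame]
    · exact ⟨t', by simp [restrict, hr, hab], ht'.of_insert fun h => hab ⟨h.1.1, h.2.1⟩⟩
  | node2 a b S D t₁ t₂ hadj ha hb hD hdiff hcover h₁ h₂ ih₁ ih₂ =>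
    exact exists_restrict_eq_some_node2 hW hadj ha hb hD hdiff hcover h₁ h₂ ih₁ ih₂ hS

lemma restrict_supp_deleteEdges {D : Set (Sym2 V)} {T t : LTree V}
    (hT : IsEPT G Set.univ D T) (c : (G.deleteEdges {e}).ConnectedComponent)
    (h : restrict c.supp T = some t) : IsEPT G c.supp D t := by
  obtain ⟨t', hr, ht'⟩ :=
    hT.exists_restrict_eq_some (isOnlyEdgeLeaving_supp G _ c) (by simpa using c.nonempty_supp)
  rw [h, Option.some_inj] at hr
  rwa [hr, ← Set.inter_univ c.supp]

end IsEPT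

theorem splitting_isEPT_general (G : SimpleGraph V)
    (u v : V)
    (T : LTree V) (hT : IsEPT G Set.univ ∅ T)
    (Su Sv : Set V)
    (hSu : Su = ((G.deleteEdges {s(u, v)}).connectedComponentMk u).supp)
    (hSv : Sv = ((G.deleteEdges {s(u, v)}).connectedComponentMk v).supp)
    (Tu Tv : LTree V)
    (hTu : restrict Su T = some Tu) (hTv : restrict Sv T = some Tv) :
    IsEPT G Su ∅ Tu ∧ IsEPT G Sv ∅ Tv := by
  subst hSu hSv
  exact ⟨hT.restrict_supp_deleteEdges _ hTu, hT.restrict_supp_deleteEdges _ hTv⟩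

/-- Splitting an EPT `T` of a tree `G` along an edge `uv` yields EPTs
`T^u`, `T^v` of the two components `G_u`, `G_v` of `G \ uv`. -/
theorem splitting_isEPT [Fintype V] (G : SimpleGraph V) (hG : G.IsTree)
    (u v : V) (huv : G.Adj u v)
    (T : LTree V) (hT : IsEPT G Set.univ ∅ T)
    (Su Sv : Set V)
    (hSu : Su = ((G.deleteEdges {s(u, v)}).connectedComponentMk u).supp)
    (hSv : Sv = ((G.deleteEdges {s(u, v)}).connectedComponentMk v).supp)
    (Tu Tv : LTree V)
    (hTu : restrict Su T = some Tu) (hTv : restrict Sv T = some Tv) :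
    IsEPT G Su ∅ Tu ∧ IsEPT G Sv ∅ Tv :=
  splitting_isEPT_general G u v T hT Su Sv hSu hSv Tu Tv hTu hTv
end

section
/- Let G be a tree, T an EPT of G, and (T^u, T^v) the splitting of T along an edge uv ∈ E(G). Then EPT-sum(G_u, T^u) + EPT-sum(G_v, T^v) < EPT-sum(G, T). -/
open scoped Classical

variable {V : Type*}

/-- The number of leaves of a rooted tree. -/
def nleaves : LTree V → ℕ
  | .leaf _ => 1
  | .node1 _ t => nleaves t
  | .node2 _ l r => nleaves l + nleaves r

/-- The EPT-sum of a rooted tree: the sum over internal nodes `e` of the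
number of leaves of the subtree rooted at `e` (equivalently, the sum of the
depths of the leaves). -/
def esum : LTree V → ℕ
  | .leaf _ => 0
  | .node1 _ t => esum t + nleaves t
  | .node2 _ l r => esum l + esum r + (nleaves l + nleaves r)

/-!
Write `N_S t` and `E_S t` for the number of leaves and the EPT-sum of `restrict S t`. The root of
`t` survives in `restrict S t` exactly when its edge lies within `S` or both subtrees meet `S`,
and then it contributes `N_S t` to `E_S t`. For disjoint `S₁`, `S₂` we have
`N_{S₁} t + N_{S₂} t ≤ nleaves t`, so node by node `E_{S₁} t + E_{S₂} t ≤ esum t`. Strictness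
comes from the lowest node of `t` whose subtree meets both `S₁` and `S₂`: each child meets only one
of them and its edge cannot lie within both, so that node contributes to only one of `E_{S₁} t`,
`E_{S₂} t`, while both sets have leaves below it.
-/

lemma nleaves_pos (t : LTree V) : 0 < nleaves t := by
  induction t with
  | leaf => simp [nleaves]
  | node1 _ _ ih => simpa [nleaves] using ih
  | node2 _ _ _ ihl => simp only [nleaves]; omega

/-- The number of leaves of `t` labelled in `S`. -/
noncomputable def restrictNLeaves (S : Set V) (t : LTree V) : ℕ := (restrict S t).elim 0 nleaves

/-- The EPT-sum of `restrict S t`, taken to be `0` when the restriction is empty. -/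
noncomputable def restrictESum (S : Set V) (t : LTree V) : ℕ := (restrict S t).elim 0 esum

section Restrict

variable {S S₁ S₂ : Set V} {e : Sym2 V} {t l r : LTree V}

lemma restrictNLeaves_leaf (v : V) :
    restrictNLeaves S (.leaf v) = if v ∈ S then 1 else 0 := by
  by_cases hv : v ∈ S <;> simp [restrictNLeaves, restrict, hv, nleaves]

lemma restrictNLeaves_node1 : restrictNLeaves S (.node1 e t) = restrictNLeaves S t := by
  unfold restrictNLeaves
  rcases h : restrict S t with _ | a
  · simp [restrict, h]
  · by_cases he : ∀ x ∈ e, x ∈ S <;> simp +contextual [restrict, h, he, nleaves]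

lemma restrictNLeaves_node2 :
    restrictNLeaves S (.node2 e l r) = restrictNLeaves S l + restrictNLeaves S r := by
  unfold restrictNLeaves
  rcases hl : restrict S l with _ | a <;> rcases hr : restrict S r with _ | b <;>
    by_cases he : ∀ x ∈ e, x ∈ S <;> simp +contextual [restrict, hl, hr, he, nleaves]

lemma restrictESum_leaf (v : V) : restrictESum S (.leaf v) = 0 := by
  by_cases hv : v ∈ S <;> simp [restrictESum, restrict, hv, esum]

lemma restrictESum_node1 :
    restrictESum S (.node1 e t) =
      restrictESum S t + if ∀ x ∈ e, x ∈ S then restrictNLeaves S t else 0 := by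
  unfold restrictESum restrictNLeaves
  rcases h : restrict S t with _ | a
  · simp [restrict, h]
  · by_cases he : ∀ x ∈ e, x ∈ S <;> simp +contextual [restrict, h, he, esum]

lemma restrictESum_node2 :
    restrictESum S (.node2 e l r) = restrictESum S l + restrictESum S r +
      if (∀ x ∈ e, x ∈ S) ∨ (0 < restrictNLeaves S l ∧ 0 < restrictNLeaves S r)
      then restrictNLeaves S l + restrictNLeaves S r else 0 := by
  unfold restrictESum restrictNLeaves
  rcases hl : restrict S l with _ | a <;> rcases hr : restrict S r with _ | b <;>
    by_cases he : ∀ x ∈ e, x ∈ S <;>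
    simp +contextual [restrict, hl, hr, he, esum, (nleaves_pos _).ne']

lemma restrictESum_node1_le :
    restrictESum S (.node1 e t) ≤ restrictESum S t + restrictNLeaves S t := by
  rw [restrictESum_node1]
  split_ifs <;> omega

lemma restrictESum_node2_le : restrictESum S (.node2 e l r) ≤
    restrictESum S l + restrictESum S r + (restrictNLeaves S l + restrictNLeaves S r) := by
  rw [restrictESum_node2]
  split_ifs <;> omega

lemma restrictESum_node2_of_not_forall (he : ¬ ∀ x ∈ e, x ∈ S)
    (h : restrictNLeaves S l = 0 ∨ restrictNLeaves S r = 0) :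
    restrictESum S (.node2 e l r) = restrictESum S l + restrictESum S r := by
  rw [restrictESum_node2, if_neg fun h' ↦ h'.elim he fun _ ↦ by omega, add_zero]

lemma not_forall_mem_of_disjoint (hd : Disjoint S₁ S₂) (h₁ : ∀ x ∈ e, x ∈ S₁) :
    ¬ ∀ x ∈ e, x ∈ S₂ := fun h₂ ↦
  Set.disjoint_left.mp hd (h₁ _ e.out_fst_mem) (h₂ _ e.out_fst_mem)

lemma restrictNLeaves_add_le (hd : Disjoint S₁ S₂) (t : LTree V) :
    restrictNLeaves S₁ t + restrictNLeaves S₂ t ≤ nleaves t := by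
  induction t with
  | leaf v =>
    have : v ∈ S₁ → v ∉ S₂ := fun hv ↦ Set.disjoint_left.mp hd hv
    simp only [restrictNLeaves_leaf, nleaves]
    split_ifs <;> tauto
  | node1 _ _ ih => simpa only [restrictNLeaves_node1, nleaves] using ih
  | node2 _ _ _ ihl ihr => simp only [restrictNLeaves_node2, nleaves]; omega

lemma restrictESum_add_le (hd : Disjoint S₁ S₂) (t : LTree V) :
    restrictESum S₁ t + restrictESum S₂ t ≤ esum t := by
  induction t with
  | leaf v => simp only [restrictESum_leaf, esum, le_refl]
  | node1 e t ih =>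
    have := restrictESum_node1_le (S := S₁) (e := e) (t := t)
    have := restrictESum_node1_le (S := S₂) (e := e) (t := t)
    have := restrictNLeaves_add_le hd t
    simp only [esum]; omega
  | node2 e l r ihl ihr =>
    have := restrictESum_node2_le (S := S₁) (e := e) (l := l) (r := r)
    have := restrictESum_node2_le (S := S₂) (e := e) (l := l) (r := r)
    have := restrictNLeaves_add_le hd l
    have := restrictNLeaves_add_le hd r
    simp only [esum]; omega

lemma restrictESum_node2_add_lt (hd : Disjoint S₁ S₂) (he : ¬ ∀ x ∈ e, x ∈ S₂)
    (h₂ : restrictNLeaves S₂ l = 0 ∨ restrictNLeaves S₂ r = 0)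
    (hpos : 0 < restrictNLeaves S₂ l + restrictNLeaves S₂ r) :
    restrictESum S₁ (.node2 e l r) + restrictESum S₂ (.node2 e l r) < esum (.node2 e l r) := by
  have := restrictESum_node2_le (S := S₁) (e := e) (l := l) (r := r)
  have := restrictESum_node2_of_not_forall he h₂
  have := restrictESum_add_le hd l
  have := restrictESum_add_le hd r
  have := restrictNLeaves_add_le hd l
  have := restrictNLeaves_add_le hd r
  simp only [esum]; omega

lemma restrictESum_add_lt (hd : Disjoint S₁ S₂) (t : LTree V)
    (h₁ : 0 < restrictNLeaves S₁ t) (h₂ : 0 < restrictNLeaves S₂ t) :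
    restrictESum S₁ t + restrictESum S₂ t < esum t := by
  induction t with
  | leaf v =>
    simp only [restrictNLeaves_leaf] at h₁ h₂
    exact (Set.disjoint_left.mp hd (by simpa [Nat.pos_iff_ne_zero] using h₁)
      (by simpa [Nat.pos_iff_ne_zero] using h₂)).elim
  | node1 e t ih =>
    rw [restrictNLeaves_node1] at h₁ h₂
    have := ih h₁ h₂
    have := restrictESum_node1_le (S := S₁) (e := e) (t := t)
    have := restrictESum_node1_le (S := S₂) (e := e) (t := t)
    have := restrictNLeaves_add_le hd t
    simp only [esum]; omega
  | node2 e l r ihl ihr =>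
    rw [restrictNLeaves_node2] at h₁ h₂
    have := restrictESum_node2_le (S := S₁) (e := e) (l := l) (r := r)
    have := restrictESum_node2_le (S := S₂) (e := e) (l := l) (r := r)
    have := restrictESum_add_le hd l
    have := restrictESum_add_le hd r
    have := restrictNLeaves_add_le hd l
    have := restrictNLeaves_add_le hd r
    by_cases hl : 0 < restrictNLeaves S₁ l ∧ 0 < restrictNLeaves S₂ l
    · have := ihl hl.1 hl.2
      simp only [esum]; omega
    by_cases hr : 0 < restrictNLeaves S₁ r ∧ 0 < restrictNLeaves S₂ r
    · have := ihr hr.1 hr.2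
      simp only [esum]; omega
    by_cases he : ∀ x ∈ e, x ∈ S₁
    · exact restrictESum_node2_add_lt hd (not_forall_mem_of_disjoint hd he) (by omega) h₂
    · rw [add_comm]
      exact restrictESum_node2_add_lt hd.symm he (by omega) h₁

lemma esum_add_esum_lt_of_restrict_eq_some {t t₁ t₂ : LTree V} (hd : Disjoint S₁ S₂)
    (h₁ : restrict S₁ t = some t₁) (h₂ : restrict S₂ t = some t₂) :
    esum t₁ + esum t₂ < esum t := by
  have key := restrictESum_add_lt hd t
    (by simp [restrictNLeaves, h₁, nleaves_pos]) (by simp [restrictNLeaves, h₂, nleaves_pos])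
  simpa [restrictESum, h₁, h₂] using key

end Restrict

lemma SimpleGraph.IsBridge.disjoint_supp {G : SimpleGraph V} {u v : V} (h : G.IsBridge s(u, v)) :
    Disjoint ((G.deleteEdges {s(u, v)}).connectedComponentMk u).supp
      ((G.deleteEdges {s(u, v)}).connectedComponentMk v).supp :=
  pairwise_disjoint_supp_connectedComponent _ fun huv ↦ h (ConnectedComponent.exact huv)

theorem splitting_eptSum_lt_general (G : SimpleGraph V) (hG : G.IsTree)
    (u v : V) (huv : G.Adj u v)
    (T : LTree V)
    (Su Sv : Set V)
    (hSu : Su = ((G.deleteEdges {s(u, v)}).connectedComponentMk u).supp)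
    (hSv : Sv = ((G.deleteEdges {s(u, v)}).connectedComponentMk v).supp)
    (Tu Tv : LTree V)
    (hTu : restrict Su T = some Tu) (hTv : restrict Sv T = some Tv) :
    esum Tu + esum Tv < esum T := by
  have hbridge : G.IsBridge s(u, v) :=
    SimpleGraph.isAcyclic_iff_forall_adj_isBridge.mp hG.isAcyclic huv
  subst hSu hSv
  exact esum_add_esum_lt_of_restrict_eq_some hbridge.disjoint_supp hTu hTv

/-- Splitting an EPT `T` of a tree `G` along an edge `uv` strictly decreases
the total EPT-sum: `EPT-sum(G_u, T^u) + EPT-sum(G_v, T^v) < EPT-sum(G, T)`. -/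
theorem splitting_eptSum_lt [Fintype V] (G : SimpleGraph V) (hG : G.IsTree)
    (u v : V) (huv : G.Adj u v)
    (T : LTree V) (hT : IsEPT G Set.univ ∅ T)
    (Su Sv : Set V)
    (hSu : Su = ((G.deleteEdges {s(u, v)}).connectedComponentMk u).supp)
    (hSv : Sv = ((G.deleteEdges {s(u, v)}).connectedComponentMk v).supp)
    (Tu Tv : LTree V)
    (hTu : restrict Su T = some Tu) (hTv : restrict Sv T = some Tv) :
    esum Tu + esum Tv < esum T :=
  splitting_eptSum_lt_general G hG u v huv T Su Sv hSu hSv Tu Tv hTu hTv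
end
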